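/- arXiv:1009.4285 — 2 statements merged into one kernel-verified Lean document; each statement's English description precedes it below -/
import Mathlib

section
/- The algebra D_{n,q} is isomorphic as a ℂ(q)-algebra to the direct sum ⊕_{c ∈ Comp_n} H_{c,q} of Young subalgebras of Iwahori-Hecke algebras, via the map ψ whose c-component sends S_i to S_i if i lies in the code of c and to 0 otherwise, and I_i to 1 if i lies in the code of c and to 0 otherwise. -/
open FreeAlgebra

/-- The defining relations of the Hecke algebra `D_{n,q}` of composed permutations, with
`m = n - 1` generators `S i` (encoded `Sum.inl i`) and `I i` (encoded `Sum.inr i`). -/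
inductive DRel (F : Type*) [CommRing F] (q : F) (m : ℕ) :
    FreeAlgebra F (Fin m ⊕ Fin m) → FreeAlgebra F (Fin m ⊕ Fin m) → Prop
  | braid (i j : Fin m) (h : (j : ℕ) = (i : ℕ) + 1) :
      DRel F q m (ι F (.inl i) * ι F (.inl j) * ι F (.inl i))
        (ι F (.inl j) * ι F (.inl i) * ι F (.inl j))
  | comm (i j : Fin m) (h : (i : ℕ) + 1 < (j : ℕ) ∨ (j : ℕ) + 1 < (i : ℕ)) :
      DRel F q m (ι F (.inl i) * ι F (.inl j)) (ι F (.inl j) * ι F (.inl i))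
  | quad (i : Fin m) :
      DRel F q m (ι F (.inl i) * ι F (.inl i))
        ((q - 1) • ι F (.inl i) + q • ι F (.inr i))
  | scomm (i j : Fin m) :
      DRel F q m (ι F (.inl i) * ι F (.inr j)) (ι F (.inr j) * ι F (.inl i))
  | icomm (i j : Fin m) :
      DRel F q m (ι F (.inr i) * ι F (.inr j)) (ι F (.inr j) * ι F (.inr i))
  | absorb (i : Fin m) :
      DRel F q m (ι F (.inl i) * ι F (.inr i)) (ι F (.inl i))
  | idem (i : Fin m) :
      DRel F q m (ι F (.inr i) * ι F (.inr i)) (ι F (.inr i))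

/-- The Hecke algebra `D_{n,q}` of composed permutations, presented by generators and
relations; here `m = n - 1`. -/
abbrev DAlg (F : Type*) [CommRing F] (q : F) (m : ℕ) := RingQuot (DRel F q m)

/-- The defining relations of the Young (parabolic) subalgebra `H_{c,q}` of the
Iwahori–Hecke algebra `H_{n,q}`, for the composition `c` of `n` with code `E`
(the complement of the descent set of `c` in `{1,…,n-1}`, encoded as a subset of
`Fin m`, `m = n - 1`): generators `S i` for `i ∈ E`, with braid, commutation and
quadratic relations. -/
inductive HRel (F : Type*) [CommRing F] (q : F) (m : ℕ) (E : Finset (Fin m)) :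
    FreeAlgebra F {i : Fin m // i ∈ E} → FreeAlgebra F {i : Fin m // i ∈ E} → Prop
  | braid (i j : {i : Fin m // i ∈ E}) (h : ((j : Fin m) : ℕ) = ((i : Fin m) : ℕ) + 1) :
      HRel F q m E (ι F i * ι F j * ι F i) (ι F j * ι F i * ι F j)
  | comm (i j : {i : Fin m // i ∈ E})
      (h : ((i : Fin m) : ℕ) + 1 < ((j : Fin m) : ℕ) ∨
           ((j : Fin m) : ℕ) + 1 < ((i : Fin m) : ℕ)) :
      HRel F q m E (ι F i * ι F j) (ι F j * ι F i)
  | quad (i : {i : Fin m // i ∈ E}) :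
      HRel F q m E (ι F i * ι F i) ((q - 1) • ι F i + q • 1)

/-- The Young subalgebra `H_{c,q}` of `H_{n,q}` for the composition with code `E`. -/
abbrev HAlg (F : Type*) [CommRing F] (q : F) (m : ℕ) (E : Finset (Fin m)) :=
  RingQuot (HRel F q m E)

/-!
The `I i` are commuting central idempotents, so the atoms
`e_E = ∏_{i ∈ E} I i * ∏_{i ∉ E} (1 - I i)` are central idempotents summing to `1`, with
`I i * e_E = [i ∈ E] e_E`, hence `S i * e_E = 0` for `i ∉ E`, and `π_T (e_E) = δ_{E,T}`
for the components `π_T` of `ψ`. In the other direction `S x ↦ S x * e_E + q (1 - e_E)`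
defines an algebra map `σ_E : H_E → D` with `σ_E (π_E x) = x * e_E + ε (π_E x) (1 - e_E)`,
where `ε` is the augmentation `S x ↦ q`. So `ψ x = 0` forces every `x * e_E` to vanish,
whence `x = ∑_E x * e_E = 0`; and `ψ (∑_E σ_E (f_E) * e_E) = f`.
-/

section BoolAtom

variable {R ι : Type*} [CommRing R] [Fintype ι] [DecidableEq ι]

def boolAtom (p : ι → R) (E : Finset ι) : R :=
  (∏ i ∈ E, p i) * ∏ i ∈ Eᶜ, (1 - p i)

theorem sum_boolAtom (p : ι → R) : ∑ E, boolAtom p E = 1 := by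
  simpa [boolAtom] using (Fintype.prod_add p (1 - p ·)).symm

theorem isIdempotentElem_boolAtom {p : ι → R} (hp : ∀ i, IsIdempotentElem (p i))
    (E : Finset ι) : IsIdempotentElem (boolAtom p E) :=
  (Finset.prod_induction _ _ (fun _ _ => .mul) .one fun i _ => hp i).mul
    (Finset.prod_induction _ _ (fun _ _ => .mul) .one fun i _ => (hp i).one_sub)

theorem mul_boolAtom_of_mem {p : ι → R} {i : ι} {E : Finset ι} (hp : IsIdempotentElem (p i))
    (hi : i ∈ E) : p i * boolAtom p E = boolAtom p E := by
  rw [boolAtom, ← Finset.mul_prod_erase E p hi, ← mul_assoc, ← mul_assoc, hp.eq]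

theorem mul_boolAtom_of_notMem {p : ι → R} {i : ι} {E : Finset ι} (hp : IsIdempotentElem (p i))
    (hi : i ∉ E) : p i * boolAtom p E = 0 := by
  rw [boolAtom, ← Finset.mul_prod_erase Eᶜ _ (Finset.mem_compl.2 hi), mul_left_comm,
    ← mul_assoc (p i), hp.mul_one_sub_self, zero_mul, mul_zero]

end BoolAtom

section GlueAlgHom

variable {R A : Type*} [CommRing R] [Ring A] [Algebra R A] {e : A}

def glueAlgHom (he : IsIdempotentElem e) (hc : e ∈ Subalgebra.center R A) :
    A × R →ₐ[R] A where
  toFun x := x.1 * e + x.2 • (1 - e)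
  map_one' := by simp
  map_zero' := by simp
  map_add' x y := by simp only [Prod.fst_add, Prod.snd_add, add_mul, add_smul]; abel
  map_mul' x y := by
    have hc' := Subalgebra.mem_center_iff.mp hc
    have hee : x.1 * e * (y.1 * e) = x.1 * y.1 * e := by
      rw [mul_assoc, ← mul_assoc e, ← hc', mul_assoc y.1, he.eq, mul_assoc]
    have h1 : x.1 * e * (1 - e) = 0 := by rw [mul_assoc, he.mul_one_sub_self, mul_zero]
    have h2 : (1 - e) * (y.1 * e) = 0 := by
      rw [hc', ← mul_assoc, he.one_sub_mul_self, zero_mul]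
    simp only [Prod.fst_mul, Prod.snd_mul, add_mul, mul_add, smul_mul_assoc, mul_smul_comm,
      hee, h1, h2, he.one_sub.eq, smul_zero, smul_smul, add_zero, zero_add, mul_comm y.2]
  commutes' r := by simp [Algebra.algebraMap_eq_smul_one, smul_sub]

theorem glueAlgHom_apply (he : IsIdempotentElem e) (hc : e ∈ Subalgebra.center R A)
    (x : A × R) : glueAlgHom he hc x = x.1 * e + x.2 • (1 - e) := rfl

end GlueAlgHom

theorem FreeAlgebra.mem_center_of_commute_ι {R X A : Type*} [CommRing R] [Ring A] [Algebra R A]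
    (f : FreeAlgebra R X →ₐ[R] A) (hf : Function.Surjective f) {a : A}
    (h : ∀ x, Commute (f (ι R x)) a) : a ∈ Subalgebra.center R A := by
  rw [Subalgebra.mem_center_iff]
  intro b
  obtain ⟨b, rfl⟩ := hf b
  suffices Commute (f b) a from this.eq
  induction b using FreeAlgebra.induction with
  | grade0 r => rw [f.commutes]; exact Algebra.commute_algebraMap_left r a
  | grade1 x => exact h x
  | mul b c hb hc => rw [map_mul]; exact hb.mul_left hc
  | add b c hb hc => rw [map_add]; exact hb.add_left hc

namespace HAlg

variable {F : Type*} [CommRing F] (q : F) {m : ℕ} {E : Finset (Fin m)}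

def S (x : {i : Fin m // i ∈ E}) : HAlg F q m E := RingQuot.mkAlgHom F (HRel F q m E) (ι F x)

theorem S_braid {x y : {i : Fin m // i ∈ E}} (h : ((y : Fin m) : ℕ) = ((x : Fin m) : ℕ) + 1) :
    S q x * S q y * S q x = S q y * S q x * S q y := by
  simpa only [S, map_mul] using RingQuot.mkAlgHom_rel F (HRel.braid (q := q) x y h)

theorem S_comm {x y : {i : Fin m // i ∈ E}}
    (h : ((x : Fin m) : ℕ) + 1 < ((y : Fin m) : ℕ) ∨
      ((y : Fin m) : ℕ) + 1 < ((x : Fin m) : ℕ)) :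
    S q x * S q y = S q y * S q x := by
  simpa only [S, map_mul] using RingQuot.mkAlgHom_rel F (HRel.comm (q := q) x y h)

theorem S_mul_self (x : {i : Fin m // i ∈ E}) : S q x * S q x = (q - 1) • S q x + q • 1 := by
  simpa only [S, map_mul, map_add, map_smul, map_one] using
    RingQuot.mkAlgHom_rel F (HRel.quad (q := q) x)

variable (E) in
def augmentation : HAlg F q m E →ₐ[F] F :=
  RingQuot.liftAlgHom F ⟨lift F fun _ => q, fun _ _ r => by
    induction r with
    | braid | comm => simp only [map_mul, lift_ι_apply]
    | quad =>
      simp only [map_mul, map_add, map_smul, map_one, lift_ι_apply, smul_eq_mul]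
      ring⟩

theorem augmentation_S (x : {i : Fin m // i ∈ E}) : augmentation q E (S q x) = q := by
  simp only [augmentation, S, RingQuot.liftAlgHom_mkAlgHom_apply, lift_ι_apply]

end HAlg

namespace DAlg

variable {F : Type*} [CommRing F] (q : F) {m : ℕ}

def S (i : Fin m) : DAlg F q m := RingQuot.mkAlgHom F (DRel F q m) (ι F (.inl i))

def I (i : Fin m) : DAlg F q m := RingQuot.mkAlgHom F (DRel F q m) (ι F (.inr i))

theorem S_braid {i j : Fin m} (h : (j : ℕ) = (i : ℕ) + 1) :
    S q i * S q j * S q i = S q j * S q i * S q j := by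
  simpa only [S, map_mul] using RingQuot.mkAlgHom_rel F (DRel.braid (q := q) i j h)

theorem S_comm {i j : Fin m} (h : (i : ℕ) + 1 < (j : ℕ) ∨ (j : ℕ) + 1 < (i : ℕ)) :
    S q i * S q j = S q j * S q i := by
  simpa only [S, map_mul] using RingQuot.mkAlgHom_rel F (DRel.comm (q := q) i j h)

theorem S_mul_self (i : Fin m) : S q i * S q i = (q - 1) • S q i + q • I q i := by
  simpa only [S, I, map_mul, map_add, map_smul] using
    RingQuot.mkAlgHom_rel F (DRel.quad (q := q) i)

theorem commute_S_I (i j : Fin m) : Commute (S q i) (I q j) := by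
  simpa only [commute_iff_eq, S, I, map_mul] using RingQuot.mkAlgHom_rel F (DRel.scomm (q := q) i j)

theorem commute_I_I (i j : Fin m) : Commute (I q i) (I q j) := by
  simpa only [commute_iff_eq, I, map_mul] using RingQuot.mkAlgHom_rel F (DRel.icomm (q := q) i j)

theorem S_mul_I_self (i : Fin m) : S q i * I q i = S q i := by
  simpa only [S, I, map_mul] using RingQuot.mkAlgHom_rel F (DRel.absorb (q := q) i)

theorem isIdempotentElem_I (i : Fin m) : IsIdempotentElem (I q i) := by
  simpa only [isIdempotentElem_iff, I, map_mul] using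
    RingQuot.mkAlgHom_rel F (DRel.idem (q := q) i)

theorem I_mem_center (i : Fin m) : I q i ∈ Subalgebra.center F (DAlg F q m) :=
  FreeAlgebra.mem_center_of_commute_ι _ (RingQuot.mkAlgHom_surjective F _) fun
    | .inl j => commute_S_I q j i
    | .inr j => commute_I_I q j i

def centralI (i : Fin m) : Subalgebra.center F (DAlg F q m) := ⟨I q i, I_mem_center q i⟩

theorem isIdempotentElem_centralI (i : Fin m) : IsIdempotentElem (centralI q i) :=
  Subtype.ext (isIdempotentElem_I q i)

def blockIdempotent (E : Finset (Fin m)) : DAlg F q m :=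
  (boolAtom (centralI q) E : Subalgebra.center F (DAlg F q m))

theorem blockIdempotent_mem_center (E : Finset (Fin m)) :
    blockIdempotent q E ∈ Subalgebra.center F (DAlg F q m) :=
  Subtype.prop _

theorem isIdempotentElem_blockIdempotent (E : Finset (Fin m)) :
    IsIdempotentElem (blockIdempotent q E) :=
  congrArg Subtype.val (isIdempotentElem_boolAtom (p := centralI q) (isIdempotentElem_centralI q) E)

theorem sum_blockIdempotent : ∑ E, blockIdempotent q E = (1 : DAlg F q m) := by
  simpa only [blockIdempotent, AddSubmonoidClass.coe_finsetSum, OneMemClass.coe_one] using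
    congrArg Subtype.val (sum_boolAtom (centralI q))

theorem I_mul_blockIdempotent (i : Fin m) (E : Finset (Fin m)) :
    I q i * blockIdempotent q E = if i ∈ E then blockIdempotent q E else 0 := by
  split_ifs with hi
  · exact congrArg Subtype.val
      (mul_boolAtom_of_mem (p := centralI q) (isIdempotentElem_centralI q i) hi)
  · exact congrArg Subtype.val
      (mul_boolAtom_of_notMem (p := centralI q) (isIdempotentElem_centralI q i) hi)

theorem S_mul_blockIdempotent_of_notMem {i : Fin m} {E : Finset (Fin m)} (hi : i ∉ E) :
    S q i * blockIdempotent q E = 0 := by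
  rw [← S_mul_I_self, mul_assoc, I_mul_blockIdempotent, if_neg hi, mul_zero]

def projGen (E : Finset (Fin m)) : Fin m ⊕ Fin m → HAlg F q m E
  | .inl i => if h : i ∈ E then HAlg.S q ⟨i, h⟩ else 0
  | .inr i => if i ∈ E then 1 else 0

theorem lift_projGen_rel (E : Finset (Fin m)) {x y : FreeAlgebra F (Fin m ⊕ Fin m)}
    (r : DRel F q m x y) : lift F (projGen q E) x = lift F (projGen q E) y := by
  induction r with
  | braid i j h =>
    simp only [map_mul, lift_ι_apply, projGen]
    split_ifs
    · exact HAlg.S_braid q h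
    all_goals simp
  | comm i j h =>
    simp only [map_mul, lift_ι_apply, projGen]
    split_ifs
    · exact HAlg.S_comm q h
    all_goals simp
  | quad i =>
    simp only [map_mul, map_add, map_smul, lift_ι_apply, projGen]
    split_ifs <;> simp [HAlg.S_mul_self]
  | scomm | icomm | absorb | idem =>
    simp only [map_mul, lift_ι_apply, projGen]
    split_ifs <;> simp

def proj (E : Finset (Fin m)) : DAlg F q m →ₐ[F] HAlg F q m E :=
  RingQuot.liftAlgHom F ⟨lift F (projGen q E), fun ⦃_ _⦄ => lift_projGen_rel q E⟩

theorem proj_S (E : Finset (Fin m)) (i : Fin m) :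
    proj q E (S q i) = if h : i ∈ E then HAlg.S q ⟨i, h⟩ else 0 := by
  simp only [proj, S, RingQuot.liftAlgHom_mkAlgHom_apply, lift_ι_apply, projGen]

theorem proj_I (E : Finset (Fin m)) (i : Fin m) :
    proj q E (I q i) = if i ∈ E then 1 else 0 := by
  simp only [proj, I, RingQuot.liftAlgHom_mkAlgHom_apply, lift_ι_apply, projGen]

theorem proj_blockIdempotent_of_ne {E T : Finset (Fin m)} (h : E ≠ T) :
    proj q T (blockIdempotent q E) = 0 := by
  obtain ⟨i, hi⟩ : ∃ i, ¬(i ∈ E ↔ i ∈ T) := by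
    contrapose! h
    exact Finset.ext h
  have key := congrArg (proj q T) (I_mul_blockIdempotent q i E)
  rw [map_mul, proj_I] at key
  by_cases hE : i ∈ E <;> by_cases hT : i ∈ T <;> simp_all

theorem proj_blockIdempotent_self (E : Finset (Fin m)) :
    proj q E (blockIdempotent q E) = 1 := by
  have h := congrArg (proj q E) (sum_blockIdempotent q)
  rwa [map_sum, map_one, Finset.sum_eq_single E (fun T _ hT => proj_blockIdempotent_of_ne q hT)
    (by simp)] at h

theorem proj_blockIdempotent (E T : Finset (Fin m)) :
    proj q T (blockIdempotent q E) = if E = T then 1 else 0 := by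
  split_ifs with h
  · exact h ▸ proj_blockIdempotent_self q E
  · exact proj_blockIdempotent_of_ne q h

def glue (E : Finset (Fin m)) : DAlg F q m × F →ₐ[F] DAlg F q m :=
  glueAlgHom (isIdempotentElem_blockIdempotent q E) (blockIdempotent_mem_center q E)

theorem glue_apply (E : Finset (Fin m)) (x : DAlg F q m × F) :
    glue q E x = x.1 * blockIdempotent q E + x.2 • (1 - blockIdempotent q E) := rfl

theorem glue_comp_lift_rel (E : Finset (Fin m)) {x y : FreeAlgebra F {i : Fin m // i ∈ E}}
    (r : HRel F q m E x y) :
    (glue q E).comp (lift F fun j => (S q j.1, q)) x =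
      (glue q E).comp (lift F fun j => (S q j.1, q)) y := by
  rw [AlgHom.comp_apply, AlgHom.comp_apply]
  induction r with
  | braid i j h => simp only [map_mul (lift F _), lift_ι_apply, Prod.mk_mul_mk, S_braid q h]
  | comm i j h => simp only [map_mul (lift F _), lift_ι_apply, Prod.mk_mul_mk, S_comm q h]
  | quad i =>
    simp only [map_mul (lift F _), map_add (lift F _), map_smul (lift F _),
      map_one (lift F _), lift_ι_apply, Prod.mk_mul_mk, Prod.smul_mk, Prod.mk_add_mk,
      Prod.one_eq_mk, glue_apply, S_mul_self, add_mul, smul_mul_assoc, one_mul,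
      I_mul_blockIdempotent, if_pos i.2]
    module

/-- The map `σ_E`. The summand `q (1 - e_E)` makes it unital; `q` works because it is a root
of the quadratic relation `a * a = (q - 1) * a + q`. -/
def ofBlock (E : Finset (Fin m)) : HAlg F q m E →ₐ[F] DAlg F q m :=
  RingQuot.liftAlgHom F ⟨(glue q E).comp (lift F fun j => (S q j.1, q)),
    fun ⦃_ _⦄ => glue_comp_lift_rel q E⟩

theorem ofBlock_S (E : Finset (Fin m)) (x : {i : Fin m // i ∈ E}) :
    ofBlock q E (HAlg.S q x) = glue q E (S q x.1, q) := by
  rw [ofBlock, HAlg.S, RingQuot.liftAlgHom_mkAlgHom_apply, AlgHom.comp_apply, lift_ι_apply]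

theorem ofBlock_comp_proj (E : Finset (Fin m)) :
    (ofBlock q E).comp (proj q E) =
      (glue q E).comp ((AlgHom.id F _).prod ((HAlg.augmentation q E).comp (proj q E))) := by
  ext (i | i)
  · show ofBlock q E (proj q E (S q i)) =
      glue q E (S q i, HAlg.augmentation q E (proj q E (S q i)))
    rw [proj_S]
    split_ifs with hi
    · rw [ofBlock_S, HAlg.augmentation_S]
    · rw [map_zero, map_zero, glue_apply, S_mul_blockIdempotent_of_notMem q hi, zero_smul,
        add_zero]
  · show ofBlock q E (proj q E (I q i)) =
      glue q E (I q i, HAlg.augmentation q E (proj q E (I q i)))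
    rw [proj_I, glue_apply, I_mul_blockIdempotent]
    split_ifs with hi
    · rw [map_one, map_one, one_smul, add_sub_cancel]
    · rw [map_zero, map_zero, zero_smul, add_zero]

theorem proj_comp_ofBlock (E : Finset (Fin m)) : (proj q E).comp (ofBlock q E) = AlgHom.id F _ := by
  ext x
  simp only [AlgHom.comp_apply, AlgHom.id_apply, Function.comp_apply]
  rw [← HAlg.S, ofBlock_S, glue_apply, map_add, map_mul, map_smul, map_sub, map_one,
    proj_blockIdempotent_self, proj_S, dif_pos x.2, mul_one, sub_self, smul_zero, add_zero]

theorem mul_blockIdempotent_of_proj_eq_zero {E : Finset (Fin m)} {x : DAlg F q m}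
    (h : proj q E x = 0) : x * blockIdempotent q E = 0 := by
  have key := AlgHom.congr_fun (ofBlock_comp_proj q E) x
  simp only [AlgHom.comp_apply, AlgHom.prod_apply, AlgHom.id_apply, h, map_zero, glue_apply,
    zero_smul, add_zero] at key
  exact key.symm

/-- The map `ψ`. -/
def toPi : DAlg F q m →ₐ[F] ∀ E : Finset (Fin m), HAlg F q m E := AlgHom.pi (proj q)

theorem toPi_injective : Function.Injective (toPi q (m := m)) := by
  refine (injective_iff_map_eq_zero _).mpr fun x hx => ?_
  calc x = ∑ E, x * blockIdempotent q E := by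
        rw [← Finset.mul_sum, sum_blockIdempotent, mul_one]
    _ = 0 := Finset.sum_eq_zero fun E _ => mul_blockIdempotent_of_proj_eq_zero q (congrFun hx E)

theorem toPi_surjective : Function.Surjective (toPi q (m := m)) := by
  intro f
  refine ⟨∑ E, ofBlock q E (f E) * blockIdempotent q E, funext fun T => ?_⟩
  simp only [toPi, AlgHom.pi_apply, map_sum, map_mul, proj_blockIdempotent, mul_ite, mul_one,
    mul_zero, Finset.sum_ite_eq', Finset.mem_univ, if_true]
  exact AlgHom.congr_fun (proj_comp_ofBlock q T) (f T)

end DAlg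

/-- Over `ℂ(q)`, the algebra `D_{n,q}` is isomorphic as a
`ℂ(q)`-algebra to the direct sum `⊕_{c ∈ Comp_n} H_{c,q}` of the Young subalgebras of the
Iwahori–Hecke algebras (compositions `c` of `n` being in bijection with their codes
`E ⊆ {1,…,n-1}`), via the map `ψ` whose `c`-component sends `S i` to `S i` if `i` lies in
the code of `c` and to `0` otherwise, and `I i` to `1` if `i` lies in the code of `c` and
to `0` otherwise. -/
theorem DAlg_iso_direct_sum_of_young_hecke (n : ℕ) :
    ∃ ψ : DAlg (RatFunc ℂ) RatFunc.X (n - 1) ≃ₐ[RatFunc ℂ]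
      (∀ E : Finset (Fin (n - 1)), HAlg (RatFunc ℂ) RatFunc.X (n - 1) E),
      ∀ (i : Fin (n - 1)) (E : Finset (Fin (n - 1))),
        (ψ (RingQuot.mkAlgHom (RatFunc ℂ) (DRel (RatFunc ℂ) RatFunc.X (n - 1))
            (ι (RatFunc ℂ) (.inl i))) E =
          if h : i ∈ E then
            RingQuot.mkAlgHom (RatFunc ℂ) (HRel (RatFunc ℂ) RatFunc.X (n - 1) E)
              (ι (RatFunc ℂ) ⟨i, h⟩)
          else 0) ∧
        (ψ (RingQuot.mkAlgHom (RatFunc ℂ) (DRel (RatFunc ℂ) RatFunc.X (n - 1))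
            (ι (RatFunc ℂ) (.inr i))) E =
          if i ∈ E then 1 else 0) :=
  ⟨AlgEquiv.ofBijective (DAlg.toPi _) ⟨DAlg.toPi_injective _, DAlg.toPi_surjective _⟩,
    fun i E => ⟨DAlg.proj_S _ E i, DAlg.proj_I _ E i⟩⟩
end

section
/- Every distinguished minimal-length representative ω of a right coset of the Young subgroup S_{c↑n} (where c↑n appends a final part n−|c|) is a shuffle of a distinguished representative ω_c of a right coset of S_c in S_{|c|} with the increasing word |c|+1, |c|+2, ..., n; moreover if j_{|c|+1} < ... < j_n are the positions of |c|+1,...,n in ω, then a reduced expression of ω is obtained by concatenating a reduced expression of ω_c with the blocks (s_{|c|}s_{|c|−1}···s_{j_{|c|+1}})(s_{|c|+1}···s_{j_{|c|+2}})···(s_{n−1}···s_{j_n}). -/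
/-- The simple transposition `s_i = (i, i+1)` of `Fin n` (identity if `i + 1 ≥ n`). -/
def simpleTransposition (n i : ℕ) : Equiv.Perm (Fin n) :=
  if h : i + 1 < n then Equiv.swap ⟨i, Nat.lt_of_succ_lt h⟩ ⟨i + 1, h⟩ else 1

/-- The Coxeter length (inversion number) of a permutation of `Fin n`. -/
noncomputable def permLength {n : ℕ} (σ : Equiv.Perm (Fin n)) : ℕ :=
  Set.ncard {p : Fin n × Fin n | p.1 < p.2 ∧ σ p.2 < σ p.1}

/-- `l` is a reduced word for `σ ∈ S_n`. -/
def IsReducedWord (n : ℕ) (l : List ℕ) (σ : Equiv.Perm (Fin n)) : Prop :=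
  (∀ i ∈ l, i + 1 < n) ∧ (l.map (simpleTransposition n)).prod = σ ∧
    l.length = permLength σ

/-- The (0-indexed) descent set of a permutation: `{i | σ(i) > σ(i+1)}`; the recoil set
of `ω` is `permDes ω⁻¹`. -/
def permDes {n : ℕ} (σ : Equiv.Perm (Fin n)) : Set ℕ :=
  {i | ∃ h : i + 1 < n, σ ⟨i + 1, h⟩ < σ ⟨i, Nat.lt_of_succ_lt h⟩}

/-- The concatenation of the blocks `(s_{t-1} s_{t-2} ⋯ s_{j_t})` for the values
`t = m, …, n-1` (0-indexed), where `j_t = ω⁻¹(t)` is the position of `t` in the word of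
`ω`. -/
def tailWord (n m : ℕ) (ω : Equiv.Perm (Fin n)) : List ℕ :=
  (List.range' m (n - m)).flatMap fun t =>
    if ht : t < n then
      (List.range' ((ω⁻¹ ⟨t, ht⟩ : ℕ)) (t - (ω⁻¹ ⟨t, ht⟩ : ℕ))).reverse
    else []

/-!
A recoil of `ω` at some `t ≥ m` is excluded, so the letters `m, …, n - 1` occur in `ω` in
increasing order. Deleting the largest letter `N` of `ω ∈ S_{N+1}`, at position `j`, leaves
`ω' ∈ S_N` with `ω = ω' · s_{N-1} ⋯ s_j`, and the deletion removes exactly the `N - j`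
inversions `(j, q)`, `q > j`, so lengths add. As `N` is the rightmost large letter, the tail
word of `ω` is that of `ω'` followed by `s_{N-1} ⋯ s_j`; induction on `n - m` ends at `ω_c`.
-/

open Equiv Equiv.Perm

def descendingWord (a b : ℕ) : List ℕ :=
  (List.range' a (b - a)).reverse

lemma tailWord_eq (n m : ℕ) (ω : Perm (Fin n)) :
    tailWord n m ω = (List.range' m (n - m)).flatMap fun t =>
      if ht : t < n then descendingWord (ω⁻¹ ⟨t, ht⟩) t else [] :=
  rfl

lemma Fin.val_succAbove {N : ℕ} (j : Fin (N + 1)) (y : Fin N) :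
    (j.succAbove y : ℕ) = if (y : ℕ) < j then (y : ℕ) else (y : ℕ) + 1 := by
  unfold Fin.succAbove
  split_ifs <;> simp_all [Fin.lt_def]

lemma simpleTransposition_apply_val {n i : ℕ} (h : i + 1 < n) (x : Fin n) :
    (simpleTransposition n i x : ℕ) =
      if (x : ℕ) = i then i + 1 else if (x : ℕ) = i + 1 then i else (x : ℕ) := by
  simp only [simpleTransposition, dif_pos h, swap_apply_def]
  split_ifs <;> simp_all [Fin.ext_iff]

lemma extendDomain_castLEquiv_apply_val {m n : ℕ} (h : m ≤ n) (e : Perm (Fin m)) (x : Fin n) :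
    (e.extendDomain (Fin.castLEquiv h) x : ℕ) =
      if hx : (x : ℕ) < m then ((e ⟨x, hx⟩ : Fin m) : ℕ) else (x : ℕ) := by
  split_ifs with hx
  · rw [extendDomain_apply_subtype e (Fin.castLEquiv h) hx]; rfl
  · rw [extendDomain_apply_not_subtype e (Fin.castLEquiv h) hx]

lemma simpleTransposition_eq_extendDomain {m n i : ℕ} (h : m ≤ n) (hi : i + 1 < m) :
    simpleTransposition n i = (simpleTransposition m i).extendDomain (Fin.castLEquiv h) := by
  ext x
  rw [extendDomain_castLEquiv_apply_val, simpleTransposition_apply_val (by omega)]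
  by_cases hx : (x : ℕ) < m
  · rw [dif_pos hx, simpleTransposition_apply_val hi]
  · rw [dif_neg hx, if_neg (by omega), if_neg (by omega)]

lemma prod_map_simpleTransposition_eq_extendDomain {m n : ℕ} (h : m ≤ n) {l : List ℕ}
    (hl : ∀ i ∈ l, i + 1 < m) :
    (l.map (simpleTransposition n)).prod =
      (l.map (simpleTransposition m)).prod.extendDomain (Fin.castLEquiv h) := by
  rw [← extendDomainHom_apply, map_list_prod, List.map_map]
  exact congrArg _ (List.map_congr_left fun i hi => simpleTransposition_eq_extendDomain h (hl i hi))

lemma prod_descendingWord_apply_val {n a b : ℕ} (hab : a ≤ b) (hb : b < n) (x : Fin n) :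
    (((descendingWord a b).map (simpleTransposition n)).prod x : ℕ) =
      if (x : ℕ) < a then (x : ℕ)
      else if (x : ℕ) = a then b
      else if (x : ℕ) ≤ b then (x : ℕ) - 1 else (x : ℕ) := by
  obtain ⟨d, rfl⟩ := Nat.exists_eq_add_of_le hab
  rw [descendingWord, Nat.add_sub_cancel_left]
  induction d with
  | zero =>
    simp only [List.range'_zero, List.reverse_nil, List.map_nil, List.prod_nil, one_apply,
      add_zero]
    split_ifs <;> omega
  | succ d ih =>
    rw [List.range'_concat, List.reverse_append, List.map_append, List.prod_append]
    simp only [List.reverse_cons, List.reverse_nil, List.nil_append, List.map_cons,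
      List.map_nil, List.prod_cons, List.prod_nil, mul_one, Perm.mul_apply]
    rw [simpleTransposition_apply_val (by omega), ih (by omega) (by omega)]
    split_ifs <;> omega

section DescendingWord

variable {N : ℕ} (j : Fin (N + 1))

lemma prod_descendingWord_succAbove (y : Fin N) :
    ((descendingWord j N).map (simpleTransposition (N + 1))).prod (j.succAbove y) =
      y.castSucc :=
  Fin.ext <| by
    rw [prod_descendingWord_apply_val (Nat.lt_succ_iff.mp j.isLt) N.lt_succ_self,
      Fin.val_succAbove, Fin.val_castSucc]
    split_ifs <;> omega

lemma prod_descendingWord_self :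
    ((descendingWord j N).map (simpleTransposition (N + 1))).prod j = Fin.last N :=
  Fin.ext <| by
    rw [prod_descendingWord_apply_val (Nat.lt_succ_iff.mp j.isLt) N.lt_succ_self, Fin.val_last,
      if_neg (lt_irrefl _), if_pos rfl]

variable (e : Perm (Fin N))

lemma extendDomain_castLEquiv_castSucc (y : Fin N) :
    e.extendDomain (Fin.castLEquiv N.le_succ) y.castSucc = (e y).castSucc :=
  Fin.ext <| by rw [extendDomain_castLEquiv_apply_val, Fin.val_castSucc, dif_pos y.isLt]; rfl

lemma extendDomain_castLEquiv_last :
    e.extendDomain (Fin.castLEquiv N.le_succ) (Fin.last N) = Fin.last N :=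
  Fin.ext <| by rw [extendDomain_castLEquiv_apply_val, Fin.val_last, dif_neg (lt_irrefl _)]

end DescendingWord

section EraseLast

variable {N : ℕ} (ω : Perm (Fin (N + 1)))

/-- `ω` with the letter `N` deleted from its word. -/
noncomputable def eraseLast : Perm (Fin N) :=
  Equiv.ofBijective
    (fun x => (ω ((ω⁻¹ (Fin.last N)).succAbove x)).castPred fun h =>
      Fin.succAbove_ne _ x (eq_inv_iff_eq.mpr h))
    (Finite.injective_iff_bijective.mp fun _ _ hxy =>
      Fin.succAbove_right_injective (ω.injective (Fin.castPred_inj.mp hxy)))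

lemma castSucc_eraseLast_apply (x : Fin N) :
    (eraseLast ω x).castSucc = ω ((ω⁻¹ (Fin.last N)).succAbove x) := by
  rw [eraseLast, ofBijective_apply, Fin.castSucc_castPred]

lemma succAbove_eraseLast_inv_apply (y : Fin N) :
    (ω⁻¹ (Fin.last N)).succAbove ((eraseLast ω)⁻¹ y) = ω⁻¹ y.castSucc := by
  rw [eq_inv_iff_eq, ← castSucc_eraseLast_apply]
  simp

lemma val_eraseLast_apply (x : Fin N) :
    (eraseLast ω x : ℕ) = ω ((ω⁻¹ (Fin.last N)).succAbove x) :=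
  congrArg Fin.val (castSucc_eraseLast_apply ω x)

lemma eraseLast_lt_eraseLast_iff (x y : Fin N) :
    eraseLast ω x < eraseLast ω y ↔
      ω ((ω⁻¹ (Fin.last N)).succAbove x) < ω ((ω⁻¹ (Fin.last N)).succAbove y) := by
  rw [← Fin.castSucc_lt_castSucc_iff, castSucc_eraseLast_apply, castSucc_eraseLast_apply]

lemma inversions_eq_union_eraseLast :
    {p : Fin (N + 1) × Fin (N + 1) | p.1 < p.2 ∧ ω p.2 < ω p.1} =
      Prod.mk (ω⁻¹ (Fin.last N)) '' Set.Ioi (ω⁻¹ (Fin.last N)) ∪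
        Prod.map (ω⁻¹ (Fin.last N)).succAbove (ω⁻¹ (Fin.last N)).succAbove ''
          {p : Fin N × Fin N | p.1 < p.2 ∧ eraseLast ω p.2 < eraseLast ω p.1} := by
  set j := ω⁻¹ (Fin.last N)
  have hωj : ω j = Fin.last N := ω.apply_symm_apply _
  ext ⟨p, q⟩
  simp only [Set.mem_ofPred_eq, Set.mem_union, Set.mem_image, Set.mem_Ioi, Prod.mk.injEq,
    Prod.exists, Prod.map, eraseLast_lt_eraseLast_iff]
  constructor
  · rintro ⟨hpq, hinv⟩
    by_cases hp : p = j
    · exact Or.inl ⟨q, hp ▸ hpq, hp.symm, rfl⟩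
    · have hq : q ≠ j := by
        rintro rfl
        exact (Fin.le_last _).not_gt (hωj ▸ hinv)
      obtain ⟨x, rfl⟩ := Fin.exists_succAbove_eq hp
      obtain ⟨y, rfl⟩ := Fin.exists_succAbove_eq hq
      exact Or.inr ⟨x, y, ⟨Fin.succAbove_lt_succAbove_iff.mp hpq, hinv⟩, rfl, rfl⟩
  · rintro (⟨q, hq, rfl, rfl⟩ | ⟨x, y, ⟨hxy, hinv⟩, rfl, rfl⟩)
    · refine ⟨hq, hωj ▸ Fin.lt_last_iff_ne_last.mpr fun h => hq.ne ?_⟩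
      exact ω.injective (hωj ▸ h) |>.symm
    · exact ⟨Fin.succAbove_lt_succAbove_iff.mpr hxy, hinv⟩

lemma permLength_eq_permLength_eraseLast_add :
    permLength ω = permLength (eraseLast ω) + (N - (ω⁻¹ (Fin.last N) : ℕ)) := by
  set j := ω⁻¹ (Fin.last N)
  have hdisj : Disjoint (Prod.mk j '' Set.Ioi j)
      (Prod.map j.succAbove j.succAbove ''
        {p : Fin N × Fin N | p.1 < p.2 ∧ eraseLast ω p.2 < eraseLast ω p.1}) := by
    rw [Set.disjoint_left]
    rintro _ ⟨q, -, rfl⟩ ⟨⟨x, y⟩, -, hxy⟩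
    exact Fin.succAbove_ne j x (congrArg Prod.fst hxy)
  have hinj : Function.Injective (Prod.map j.succAbove j.succAbove) :=
    Fin.succAbove_right_injective.prodMap Fin.succAbove_right_injective
  rw [permLength, inversions_eq_union_eraseLast, Set.ncard_union_eq hdisj,
    Set.ncard_image_of_injective _ (Prod.mk_right_injective j),
    Set.ncard_image_of_injective _ hinj, ← Finset.coe_Ioi, Set.ncard_coe_finset, Fin.card_Ioi,
    permLength, add_comm, Nat.add_sub_cancel]

lemma extendDomain_eraseLast_mul_prod_descendingWord :
    (eraseLast ω).extendDomain (Fin.castLEquiv N.le_succ) *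
        ((descendingWord (ω⁻¹ (Fin.last N)) N).map (simpleTransposition (N + 1))).prod = ω := by
  ext1 x
  rw [Perm.mul_apply]
  by_cases hx : x = ω⁻¹ (Fin.last N)
  · rw [hx, prod_descendingWord_self, extendDomain_castLEquiv_last]
    exact (ω.apply_symm_apply _).symm
  · obtain ⟨y, rfl⟩ := Fin.exists_succAbove_eq hx
    rw [prod_descendingWord_succAbove, extendDomain_castLEquiv_castSucc, castSucc_eraseLast_apply]

lemma val_eraseLast_inv_apply {y : Fin N} (hy : ω⁻¹ y.castSucc < ω⁻¹ (Fin.last N)) :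
    ((eraseLast ω)⁻¹ y : ℕ) = ω⁻¹ y.castSucc := by
  rw [← succAbove_eraseLast_inv_apply, Fin.succAbove_lt_iff_castSucc_lt] at hy
  rw [← succAbove_eraseLast_inv_apply, Fin.succAbove_of_castSucc_lt _ _ hy, Fin.val_castSucc]

lemma tailWord_succ {m : ℕ} (hm : m ≤ N)
    (h : ∀ t : Fin N, m ≤ (t : ℕ) → ω⁻¹ t.castSucc < ω⁻¹ (Fin.last N)) :
    tailWord (N + 1) m ω =
      tailWord N m (eraseLast ω) ++ descendingWord (ω⁻¹ (Fin.last N)) N := by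
  rw [tailWord_eq, tailWord_eq, Nat.sub_add_comm hm, List.range'_concat, List.flatMap_append,
    List.flatMap_singleton, one_mul, Nat.add_sub_cancel' hm, dif_pos N.lt_succ_self]
  congr 1
  refine List.flatMap_congr fun t ht => ?_
  rw [List.mem_range'_1] at ht
  rw [dif_pos (by omega : t < N + 1), dif_pos (by omega : t < N),
    val_eraseLast_inv_apply ω (h ⟨t, by omega⟩ ht.1)]
  rfl

variable {ω}

lemma IsReducedWord.append_descendingWord {l : List ℕ} (h : IsReducedWord N l (eraseLast ω)) :
    IsReducedWord (N + 1) (l ++ descendingWord (ω⁻¹ (Fin.last N)) N) ω := by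
  obtain ⟨hletters, hprod, hlength⟩ := h
  refine ⟨fun i hi => ?_, ?_, ?_⟩
  · rcases List.mem_append.mp hi with hi | hi
    · exact (hletters i hi).trans N.lt_succ_self
    · rw [descendingWord, List.mem_reverse, List.mem_range'] at hi
      omega
  · rw [List.map_append, List.prod_append,
      prod_map_simpleTransposition_eq_extendDomain N.le_succ hletters, hprod,
      extendDomain_eraseLast_mul_prod_descendingWord]
  · rw [List.length_append, hlength, descendingWord, List.length_reverse, List.length_range',
      permLength_eq_permLength_eraseLast_add]

lemma StrictMonoOn.eraseLast {m : ℕ} (h : StrictMonoOn ω {p | m ≤ (ω p : ℕ)}) :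
    StrictMonoOn (eraseLast ω) {x | m ≤ (eraseLast ω x : ℕ)} := by
  intro x hx y hy hxy
  rw [Set.mem_ofPred_eq, val_eraseLast_apply] at hx hy
  rw [eraseLast_lt_eraseLast_iff]
  exact h hx hy (Fin.strictMono_succAbove _ hxy)

end EraseLast

lemma exists_shuffle_of_strictMonoOn {m n : ℕ} (hmn : m ≤ n) (ω : Perm (Fin n))
    (h : StrictMonoOn ω {p | m ≤ (ω p : ℕ)}) :
    ∃ pos : Fin m → Fin n, StrictMono pos ∧
      (∀ p : Fin n, (ω p : ℕ) < m ↔ p ∈ Set.range pos) ∧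
      ∃ ωc : Perm (Fin m), (∀ i : Fin m, (ωc i : ℕ) = (ω (pos i) : ℕ)) ∧
        ∀ lc : List ℕ, IsReducedWord m lc ωc → IsReducedWord n (lc ++ tailWord n m ω) ω := by
  induction n, hmn using Nat.le_induction with
  | base =>
    refine ⟨id, strictMono_id, fun p => ⟨fun _ => ⟨p, rfl⟩, fun _ => (ω p).isLt⟩, ω,
      fun _ => rfl, fun lc hlc => ?_⟩
    rwa [tailWord, Nat.sub_self, List.range'_zero, List.flatMap_nil, List.append_nil]
  | succ N hmN ih =>
    set j := ω⁻¹ (Fin.last N)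
    have hωj : ω j = Fin.last N := ω.apply_symm_apply _
    obtain ⟨pos, hpos, hrange, ωc, hωc, hred⟩ := ih (eraseLast ω) h.eraseLast
    refine ⟨j.succAbove ∘ pos, (Fin.strictMono_succAbove j).comp hpos, fun p => ?_, ωc,
      fun i => (hωc i).trans (val_eraseLast_apply ω _), fun lc hlc => ?_⟩
    · by_cases hp : p = j
      · simp only [hp, hωj, Fin.val_last, Set.mem_range, Function.comp_apply,
          Fin.succAbove_ne, exists_false, iff_false, not_lt]
        exact hmN
      · obtain ⟨x, rfl⟩ := Fin.exists_succAbove_eq hp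
        rw [← val_eraseLast_apply, hrange, Set.range_comp,
          Fin.succAbove_right_injective.mem_set_image]
    · have hlarge (t : Fin N) (ht : m ≤ (t : ℕ)) : ω⁻¹ t.castSucc < j := by
        refine (h.lt_iff_lt (by simpa using ht) (show m ≤ (ω j : ℕ) by rw [hωj]; exact hmN)).mp ?_
        simp [hωj]
      rw [tailWord_succ ω hmN hlarge, ← List.append_assoc]
      exact (hred lc hlc).append_descendingWord

section Recoils

variable {m n : ℕ} {ω : Perm (Fin n)}

lemma inv_lt_inv_succ_of_permDes_inv_lt (h : ∀ i ∈ permDes ω⁻¹, i < m) {t : ℕ}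
    (ht : t + 1 < n) (hmt : m ≤ t) : ω⁻¹ ⟨t, by omega⟩ < ω⁻¹ ⟨t + 1, ht⟩ := by
  refine lt_of_le_of_ne (not_lt.mp fun hlt => (h t ⟨ht, hlt⟩).not_ge hmt) fun he => ?_
  simpa [Fin.ext_iff] using ω⁻¹.injective he

lemma inv_lt_inv_of_permDes_inv_lt (h : ∀ i ∈ permDes ω⁻¹, i < m) {a b : Fin n}
    (ha : m ≤ (a : ℕ)) (hab : a < b) : ω⁻¹ a < ω⁻¹ b := by
  obtain ⟨a, ha'⟩ := a
  obtain ⟨b, hb⟩ := b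
  rw [Fin.mk_lt_mk] at hab
  change m ≤ a at ha
  induction b, hab using Nat.le_induction with
  | base => exact inv_lt_inv_succ_of_permDes_inv_lt h hb ha
  | succ b hab ih =>
    exact (ih (by omega)).trans (inv_lt_inv_succ_of_permDes_inv_lt h hb (by omega))

lemma strictMonoOn_of_permDes_inv_lt (h : ∀ i ∈ permDes ω⁻¹, i < m) :
    StrictMonoOn ω {p | m ≤ (ω p : ℕ)} := by
  intro p hp q hq hpq
  refine lt_of_not_ge fun hle => hpq.not_ge ?_
  rcases hle.lt_or_eq with hlt | heq
  · simpa using (inv_lt_inv_of_permDes_inv_lt h hq hlt).le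
  · exact (ω.injective heq).le

lemma permDes_inv_subset_of_strictMono (hmn : m ≤ n) {pos : Fin m → Fin n} (hpos : StrictMono pos)
    {ωc : Perm (Fin m)} (hωc : ∀ i : Fin m, (ωc i : ℕ) = (ω (pos i) : ℕ)) :
    permDes ωc⁻¹ ⊆ permDes ω⁻¹ := by
  have hinv (y : Fin m) : ω⁻¹ (Fin.castLE hmn y) = pos (ωc⁻¹ y) := by
    rw [inv_eq_iff_eq, Fin.ext_iff, ← hωc]
    simp
  rintro i ⟨hi, hlt⟩
  refine ⟨by omega, ?_⟩
  have := hpos hlt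
  rwa [← hinv, ← hinv] at this

end Recoils

/-- Let `c` be a composition of `m ≤ n`, encoded by its (0-indexed)
cut set `D ⊆ {0,…,m-2}`, and `c↑n` the composition of `n` obtained by appending the part
`n - m`, whose cut set is `D ∪ {m-1}`.  Every distinguished minimal-length representative
`ω` of a right coset of the Young subgroup `S_{c↑n}` — i.e. every `ω` with recoil set
contained in the cut set of `c↑n` — is a shuffle of a distinguished representative `ω_c`
of a right coset of `S_c` in `S_m` with the increasing word `m+1, …, n`: the values `< m`
of `ω` sit at positions `pos 0 < pos 1 < ⋯` and form the word of `ω_c` (which has recoils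
in `D`), while the values `≥ m` appear in increasing order.  Moreover, if
`j_{m} ,…, j_{n-1}` are the positions of the values `m, …, n-1` (0-indexed) in `ω`, then
a reduced expression of `ω` is obtained by concatenating any reduced expression of `ω_c`
with the blocks `(s_{m-1} ⋯ s_{j_m})(s_m ⋯ s_{j_{m+1}}) ⋯ (s_{n-2} ⋯ s_{j_{n-1}})`. -/
theorem distinguished_rep_shuffle (n m : ℕ) (hmn : m ≤ n) (D : Set ℕ)
    (hD : ∀ i ∈ D, i + 1 < m) (ω : Equiv.Perm (Fin n))
    (hω : permDes ω⁻¹ ⊆ D ∪ {i | i + 1 = m}) :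
    ∃ pos : Fin m → Fin n, StrictMono pos ∧
      (∀ p : Fin n, (ω p : ℕ) < m ↔ p ∈ Set.range pos) ∧
      ∃ ωc : Equiv.Perm (Fin m),
        (∀ i : Fin m, (ωc i : ℕ) = (ω (pos i) : ℕ)) ∧
        permDes ωc⁻¹ ⊆ D ∧
        (∀ p q : Fin n, p < q → m ≤ (ω p : ℕ) → m ≤ (ω q : ℕ) → ω p < ω q) ∧
        (∀ lc : List ℕ, IsReducedWord m lc ωc →
          IsReducedWord n (lc ++ tailWord n m ω) ω) := by
  have hrecoils : ∀ i ∈ permDes ω⁻¹, i < m := fun i hi => by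
    rcases hω hi with hi | hi
    · exact Nat.lt_of_succ_lt (hD i hi)
    · exact Nat.lt_of_succ_le hi.le
  have hlarge := strictMonoOn_of_permDes_inv_lt hrecoils
  obtain ⟨pos, hpos, hrange, ωc, hωc, hred⟩ := exists_shuffle_of_strictMonoOn hmn ω hlarge
  refine ⟨pos, hpos, hrange, ωc, hωc, fun i hi => ?_, fun p q hpq hp hq => hlarge hp hq hpq, hred⟩
  rcases hω (permDes_inv_subset_of_strictMono hmn hpos hωc hi) with hiD | him
  · exact hiD
  · exact absurd him hi.1.ne
end
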